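/- In the ℤ₄×ℤ₂ model with Hamiltonian H = -(1/2) Σ_{e=ij} κ_e (ρ₊ + ρ₋ τᵢτⱼ)(ξᵢξⱼ + ηᵢηⱼ) with κ_e ≥ 0, ρ ∈ [0,1], one has ⟨ξ₀ξ_R η₀η_R⟩ ≥ ⟨τ₀τ_R⟩, with equality when ρ = 0. -/

import Mathlib

/-!
Given `τ`, the Boltzmann weight `exp(-βH)` factorises into two identical Ising weights for `ξ` and
`η`, with couplings `β κ_e (ρ₊ + ρ₋ τᵢτⱼ) / 2`. Hence the numerator of `⟨ξ_a ξ_b η_a η_b⟩` is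
`Σ_τ C(τ)²`, where `C(τ)` is the unnormalised two-point function of that Ising model. The gauge
transformation `τ ↦ τξη` leaves `H` invariant and turns `τ_a τ_b` into `τ_a τ_b ξ_a ξ_b η_a η_b`,
so the numerator of `⟨τ_a τ_b⟩` is `Σ_τ τ_a τ_b C(τ)² ≤ Σ_τ C(τ)²`. At `ρ = 0`, `H` is also
invariant under `(η, τ) ↦ (ξτ, ξη)`, which exchanges the two observables.
-/

noncomputable section

/-- Ising spin value of a Boolean configuration entry. -/
def spin (b : Bool) : ℝ := if b then 1 else -1

variable {V E : Type*}

/-- Hamiltonian H = -(1/2) Σ_e κ_e (ρ₊ + ρ₋ τᵢτⱼ)(ξᵢξⱼ + ηᵢηⱼ) of the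
ℤ₄×ℤ₂ model written via two Ising fields ξ, η coupled to τ. -/
def H4 [Fintype E] (s t : E → V) (κ : E → ℝ) (ρ : ℝ) (ξ η τ : V → Bool) : ℝ :=
  -(1 / 2) * ∑ e, κ e * ((1 + ρ) + (1 - ρ) * spin (τ (s e)) * spin (τ (t e)))
      * (spin (ξ (s e)) * spin (ξ (t e)) + spin (η (s e)) * spin (η (t e)))

/-- Gibbs expectation of an observable f(ξ, η, τ) in the ℤ₄×ℤ₂ model. -/
def gibbs4 [Fintype V] [DecidableEq V] [Fintype E]
    (s t : E → V) (κ : E → ℝ) (ρ β : ℝ)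
    (f : (V → Bool) → (V → Bool) → (V → Bool) → ℝ) : ℝ :=
  (∑ c : (V → Bool) × (V → Bool) × (V → Bool),
      f c.1 c.2.1 c.2.2 * Real.exp (-(β * H4 s t κ ρ c.1 c.2.1 c.2.2)))
    / ∑ c : (V → Bool) × (V → Bool) × (V → Bool),
        Real.exp (-(β * H4 s t κ ρ c.1 c.2.1 c.2.2))

lemma spin_beq (x y : Bool) : spin (x == y) = spin x * spin y := by
  cases x <;> cases y <;> norm_num [spin]

lemma spin_mul_self (x : Bool) : spin x * spin x = 1 := by
  cases x <;> norm_num [spin]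

lemma spin_mul_spin_le_one (x y : Bool) : spin x * spin y ≤ 1 := by
  cases x <;> cases y <;> norm_num [spin]

def configMul (σ σ' : V → Bool) : V → Bool := fun v => σ v == σ' v

lemma spin_configMul (σ σ' : V → Bool) (v : V) :
    spin (configMul σ σ' v) = spin (σ v) * spin (σ' v) :=
  spin_beq _ _

lemma configMul_cancel_left (σ σ' : V → Bool) : configMul σ (configMul σ σ') = σ' := by
  funext v
  simp only [configMul]
  cases σ v <;> cases σ' v <;> rfl

lemma configMul_cancel_right (σ σ' : V → Bool) : configMul (configMul σ σ') σ' = σ := by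
  funext v
  simp only [configMul]
  cases σ v <;> cases σ' v <;> rfl

section Bonds

variable (s t : E → V)

def bond (σ : V → Bool) (e : E) : ℝ := spin (σ (s e)) * spin (σ (t e))

lemma bond_mul_self (σ : V → Bool) (e : E) : bond s t σ e * bond s t σ e = 1 := by
  simp only [bond]
  linear_combination spin (σ (t e)) * spin (σ (t e)) * spin_mul_self (σ (s e))
    + spin_mul_self (σ (t e))

lemma bond_configMul (σ σ' : V → Bool) (e : E) :
    bond s t (configMul σ σ') e = bond s t σ e * bond s t σ' e := by
  simp only [bond, spin_configMul]
  ring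

variable [Fintype E]

lemma H4_eq_sum_bond (κ : E → ℝ) (ρ : ℝ) (ξ η τ : V → Bool) :
    H4 s t κ ρ ξ η τ = -(1 / 2) *
      ∑ e, κ e * ((1 + ρ) + (1 - ρ) * bond s t τ e) * (bond s t ξ e + bond s t η e) := by
  simp only [H4, bond, mul_assoc]

/-- Gauge invariance `τ ↦ τξη`: on each edge `XY(X + Y) = X + Y` for bond spins `X, Y = ±1`. -/
lemma H4_configMul_gauge (κ : E → ℝ) (ρ : ℝ) (ξ η τ : V → Bool) :
    H4 s t κ ρ ξ η (configMul τ (configMul ξ η)) = H4 s t κ ρ ξ η τ := by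
  simp only [H4_eq_sum_bond, bond_configMul]
  congr 1
  refine Finset.sum_congr rfl fun e _ => ?_
  linear_combination (1 - ρ) * κ e * bond s t τ e *
    (bond s t η e * bond_mul_self s t ξ e + bond s t ξ e * bond_mul_self s t η e)

/-- At `ρ = 0` the edge weight `(1 + T)(X + Y)` is symmetric under `(Y, T) ↦ (XT, XY)`. -/
lemma H4_zero_configMul_swap (κ : E → ℝ) (ξ η τ : V → Bool) :
    H4 s t κ 0 ξ (configMul ξ τ) (configMul ξ η) = H4 s t κ 0 ξ η τ := by
  simp only [H4_eq_sum_bond, bond_configMul]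
  congr 1
  refine Finset.sum_congr rfl fun e _ => ?_
  linear_combination κ e * (1 + bond s t τ e) * bond s t η e * bond_mul_self s t ξ e

end Bonds

section Factorization

variable [Fintype E] (s t : E → V) (κ : E → ℝ) (ρ β : ℝ)

def condEnergy (τ σ : V → Bool) : ℝ :=
  β / 2 * ∑ e, κ e * ((1 + ρ) + (1 - ρ) * bond s t τ e) * bond s t σ e

lemma neg_mul_H4 (ξ η τ : V → Bool) :
    -(β * H4 s t κ ρ ξ η τ) = condEnergy s t κ ρ β τ ξ + condEnergy s t κ ρ β τ η := by
  simp only [H4_eq_sum_bond, condEnergy, ← mul_add, ← Finset.sum_add_distrib]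
  ring

variable [Fintype V] [DecidableEq V]

lemma sum_mul_exp_neg_H4 (w p q : (V → Bool) → ℝ) :
    ∑ c : (V → Bool) × (V → Bool) × (V → Bool),
        w c.2.2 * (p c.1 * q c.2.1) * Real.exp (-(β * H4 s t κ ρ c.1 c.2.1 c.2.2))
      = ∑ τ : V → Bool, w τ *
          ((∑ σ, p σ * Real.exp (condEnergy s t κ ρ β τ σ)) *
            ∑ σ, q σ * Real.exp (condEnergy s t κ ρ β τ σ)) := by
  simp only [Fintype.sum_prod_type_right, neg_mul_H4, Real.exp_add, Finset.mul_sum,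
    Finset.sum_mul]
  exact Fintype.sum_congr _ _ fun τ => Fintype.sum_congr _ _ fun η =>
    Fintype.sum_congr _ _ fun ξ => by ring

variable (a b : V)

def condCorr (τ : V → Bool) : ℝ :=
  ∑ σ, spin (σ a) * spin (σ b) * Real.exp (condEnergy s t κ ρ β τ σ)

lemma sum_spin_xi_eta_mul_exp_neg_H4 :
    ∑ c : (V → Bool) × (V → Bool) × (V → Bool),
        spin (c.1 a) * spin (c.1 b) * (spin (c.2.1 a) * spin (c.2.1 b))
          * Real.exp (-(β * H4 s t κ ρ c.1 c.2.1 c.2.2))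
      = ∑ τ, condCorr s t κ ρ β a b τ ^ 2 := by
  simpa [sq, condCorr] using sum_mul_exp_neg_H4 s t κ ρ β (fun _ => 1)
    (fun σ => spin (σ a) * spin (σ b)) (fun σ => spin (σ a) * spin (σ b))

lemma sum_spin_tau_mul_exp_neg_H4 :
    ∑ c : (V → Bool) × (V → Bool) × (V → Bool),
        spin (c.2.2 a) * spin (c.2.2 b) * Real.exp (-(β * H4 s t κ ρ c.1 c.2.1 c.2.2))
      = ∑ τ, spin (τ a) * spin (τ b) * condCorr s t κ ρ β a b τ ^ 2 := by
  have gauge : Function.Involutive fun c : (V → Bool) × (V → Bool) × (V → Bool) =>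
      (c.1, c.2.1, configMul c.2.2 (configMul c.1 c.2.1)) := fun c => by
    simp only [configMul_cancel_right]
  rw [← Equiv.sum_comp gauge.toPerm]
  convert sum_mul_exp_neg_H4 s t κ ρ β (fun τ => spin (τ a) * spin (τ b))
    (fun σ => spin (σ a) * spin (σ b)) (fun σ => spin (σ a) * spin (σ b)) using 1
  · refine Fintype.sum_congr _ _ fun ⟨ξ, η, τ⟩ => ?_
    simp only [Function.Involutive.coe_toPerm, H4_configMul_gauge, spin_configMul]
    ring
  · simp only [condCorr, sq]

lemma sum_spin_tau_mul_exp_neg_H4_zero :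
    ∑ c : (V → Bool) × (V → Bool) × (V → Bool),
        spin (c.2.2 a) * spin (c.2.2 b) * Real.exp (-(β * H4 s t κ 0 c.1 c.2.1 c.2.2))
      = ∑ c : (V → Bool) × (V → Bool) × (V → Bool),
        spin (c.1 a) * spin (c.1 b) * (spin (c.2.1 a) * spin (c.2.1 b))
          * Real.exp (-(β * H4 s t κ 0 c.1 c.2.1 c.2.2)) := by
  have swap : Function.Involutive fun c : (V → Bool) × (V → Bool) × (V → Bool) =>
      (c.1, configMul c.1 c.2.2, configMul c.1 c.2.1) := fun c => by
    simp only [configMul_cancel_left]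
  rw [← Equiv.sum_comp swap.toPerm]
  refine Fintype.sum_congr _ _ fun ⟨ξ, η, τ⟩ => ?_
  simp only [Function.Involutive.coe_toPerm, H4_zero_configMul_swap, spin_configMul]
  ring

end Factorization

theorem stmt18_general [Fintype V] [DecidableEq V] [Fintype E]
    (s t : E → V) (κ : E → ℝ) (ρ β : ℝ) (a b : V) :
    gibbs4 s t κ ρ β (fun ξ η _τ => (spin (ξ a) * spin (ξ b)) * (spin (η a) * spin (η b)))
      ≥ gibbs4 s t κ ρ β (fun _ξ _η τ => spin (τ a) * spin (τ b)) ∧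
    (ρ = 0 →
      gibbs4 s t κ ρ β (fun ξ η _τ => (spin (ξ a) * spin (ξ b)) * (spin (η a) * spin (η b)))
        = gibbs4 s t κ ρ β (fun _ξ _η τ => spin (τ a) * spin (τ b))) := by
  refine ⟨?_, ?_⟩
  · have hZ : 0 ≤ ∑ c : (V → Bool) × (V → Bool) × (V → Bool),
        Real.exp (-(β * H4 s t κ ρ c.1 c.2.1 c.2.2)) :=
      Finset.sum_nonneg fun c _ => (Real.exp_pos _).le
    refine div_le_div_of_nonneg_right ?_ hZ
    rw [sum_spin_xi_eta_mul_exp_neg_H4, sum_spin_tau_mul_exp_neg_H4]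
    exact Finset.sum_le_sum fun τ _ =>
      mul_le_of_le_one_left (sq_nonneg _) (spin_mul_spin_le_one (τ a) (τ b))
  · rintro rfl
    rw [gibbs4, gibbs4, sum_spin_tau_mul_exp_neg_H4_zero]

/-- ⟨ξ₀ξ_R η₀η_R⟩ ≥ ⟨τ₀τ_R⟩, with equality when ρ = 0. -/
theorem stmt18 [Fintype V] [DecidableEq V] [Fintype E]
    (s t : E → V) (κ : E → ℝ) (hκ : ∀ e, 0 ≤ κ e)
    (ρ β : ℝ) (hρ0 : 0 ≤ ρ) (hρ1 : ρ ≤ 1) (hβ : 0 ≤ β) (a b : V) :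
    gibbs4 s t κ ρ β (fun ξ η _τ => (spin (ξ a) * spin (ξ b)) * (spin (η a) * spin (η b)))
      ≥ gibbs4 s t κ ρ β (fun _ξ _η τ => spin (τ a) * spin (τ b)) ∧
    (ρ = 0 →
      gibbs4 s t κ ρ β (fun ξ η _τ => (spin (ξ a) * spin (ξ b)) * (spin (η a) * spin (η b)))
        = gibbs4 s t κ ρ β (fun _ξ _η τ => spin (τ a) * spin (τ b))) :=
  stmt18_general s t κ ρ β a b
end
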